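/- Equip L⁰(X) with the topology σ_s in which a set U ⊆ L⁰(X) is open if and only if for every x ∈ U there exists V ∈ 𝒱(x) with V ⊆ U (the sets 𝒱(x) form a neighborhood base of this topology). For a function f : X → L̄⁰ the following are equivalent: (ii) f(x) = sup_{V ∈ 𝒱(x)} inf { f_s(x̃) : x̃ ∈ V ∩ L⁰ₛ(X) } for every x ∈ X; (iii) for every measurable a : Ω → [−∞,∞], the sublevel set { x ∈ L⁰ₛ(X) : f_s(x) ≤ a a.e. } is closed in L⁰ₛ(X) with the topology induced from σ_s. -/

import Mathlib

open MeasureTheory Filter Set Function Topology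

noncomputable section

section Defs

variable {Ω : Type*} [MeasurableSpace Ω] {X : Type*}

/-- `x : Ω → X` is a step function (countably-valued strongly measurable function),
i.e. it agrees `μ`-a.e. with `Σₖ xₖ 1_{Aₖ}` for a sequence `(xₖ)` in `X` and a countable
measurable partition `(Aₖ)` of `Ω`. -/
def IsStep (μ : Measure Ω) (x : Ω → X) : Prop :=
  ∃ (xs : ℕ → X) (A : ℕ → Set Ω), (∀ k, MeasurableSet (A k)) ∧
    Pairwise (Disjoint on A) ∧ (⋃ k, A k) = Set.univ ∧
    ∀ᵐ ω ∂μ, ∀ k, ω ∈ A k → x ω = xs k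

/-- `xt` is a step function and `g` is a version of its image `f_s(xt)` under the extension
of `f : X → L̄⁰` to step functions. -/
def StepPair (μ : Measure Ω) (f : X → Ω → EReal) (xt : Ω → X) (g : Ω → EReal) : Prop :=
  ∃ (xs : ℕ → X) (A : ℕ → Set Ω), (∀ k, MeasurableSet (A k)) ∧
    Pairwise (Disjoint on A) ∧ (⋃ k, A k) = Set.univ ∧
    ∀ᵐ ω ∂μ, ∀ k, ω ∈ A k → xt ω = xs k ∧ g ω = f (xs k) ω

/-- `s` is a/the a.e. least upper bound (essential supremum) of the family `g`. -/
def IsAESup (μ : Measure Ω) {ι : Sort*} (g : ι → Ω → EReal) (s : Ω → EReal) : Prop :=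
  Measurable s ∧ (∀ i, ∀ᵐ ω ∂μ, g i ω ≤ s ω) ∧
    ∀ h : Ω → EReal, Measurable h → (∀ i, ∀ᵐ ω ∂μ, g i ω ≤ h ω) → ∀ᵐ ω ∂μ, s ω ≤ h ω

/-- `s` is a/the a.e. greatest lower bound (essential infimum) of the family `g`. -/
def IsAEInf (μ : Measure Ω) {ι : Sort*} (g : ι → Ω → EReal) (s : Ω → EReal) : Prop :=
  Measurable s ∧ (∀ i, ∀ᵐ ω ∂μ, s ω ≤ g i ω) ∧
    ∀ h : Ω → EReal, Measurable h → (∀ i, ∀ᵐ ω ∂μ, h ω ≤ g i ω) → ∀ᵐ ω ∂μ, h ω ≤ s ω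

end Defs

/-- The weak topology `σ(X,Y)` on `X` induced by a bilinear pairing `B : X × Y → ℝ`,
i.e. the coarsest topology making all maps `x ↦ B x y`, `y ∈ Y`, continuous. -/
def weakTopol {X Y : Type*} [AddCommGroup X] [Module ℝ X] [AddCommGroup Y] [Module ℝ Y]
    (B : X →ₗ[ℝ] Y →ₗ[ℝ] ℝ) : TopologicalSpace X :=
  TopologicalSpace.induced (fun x (y : Y) => B x y) Pi.topologicalSpace

section Nbhd

variable {Ω : Type*} [MeasurableSpace Ω]

/-- The parameters `(r, n, (yₘ))` of a basic stable neighborhood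
`V(x; r, n, (yₘ))` in `L⁰(X)`. -/
structure NbhdParam (μ : Measure Ω) (Y : Type*) [NormedAddCommGroup Y] where
  r : Ω → ℝ
  r_meas : Measurable r
  r_pos : ∀ ω, 0 < r ω
  n : Ω → ℕ
  n_meas : Measurable n
  ys : ℕ → Ω → Y
  ys_meas : ∀ m, AEStronglyMeasurable (ys m) μ

end Nbhd

section Stable

variable {Ω : Type*} [MeasurableSpace Ω]
variable {X Y : Type*} [NormedAddCommGroup X] [NormedSpace ℝ X]
  [NormedAddCommGroup Y] [NormedSpace ℝ Y]

/-- `xt` belongs to the basic stable neighborhood `V(x; r, n, (yₘ))` of `x`: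
for `μ`-a.e. `ω`, `|⟨xt(ω) - x(ω), yₘ(ω)⟩| ≤ r(ω)` for all `1 ≤ m ≤ n(ω)`. -/
def NbhdParam.Mem (B : X →ₗ[ℝ] Y →ₗ[ℝ] ℝ) {μ : Measure Ω} (V : NbhdParam μ Y)
    (x xt : Ω → X) : Prop :=
  ∀ᵐ ω ∂μ, ∀ m : ℕ, 1 ≤ m → m ≤ V.n ω → |B (xt ω - x ω) (V.ys m ω)| ≤ V.r ω

/-- σ_s-lower semi-continuity of `f : X → L̄⁰`:
`f(x) = sup_{V ∈ 𝒱(x)} inf { f_s(xt) : xt ∈ V ∩ L⁰ₛ(X) }` for every `x ∈ X`. -/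
def SigmaSLsc (μ : Measure Ω) (B : X →ₗ[ℝ] Y →ₗ[ℝ] ℝ) (f : X → Ω → EReal) : Prop :=
  ∀ x : X, ∃ I : NbhdParam μ Y → Ω → EReal,
    (∀ V : NbhdParam μ Y,
      IsAEInf μ (fun p : {p : (Ω → X) × (Ω → EReal) //
        StepPair μ f p.1 p.2 ∧ V.Mem B (fun _ => x) p.1} => p.1.2) (I V)) ∧
    IsAESup μ I (f x)

/-- σ_s-lower semi-continuity of `F : L⁰(X) → L̄⁰`:
`F(x) = sup_{V ∈ 𝒱(x)} inf { F(z) : z ∈ V }` for every `x ∈ L⁰(X)`. -/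
def SigmaSLscL0 (μ : Measure Ω) (B : X →ₗ[ℝ] Y →ₗ[ℝ] ℝ)
    (F : (Ω → X) → Ω → EReal) : Prop :=
  ∀ x : Ω → X, AEStronglyMeasurable x μ → ∃ I : NbhdParam μ Y → Ω → EReal,
    (∀ V : NbhdParam μ Y,
      IsAEInf μ
        (fun z : {z : Ω → X // AEStronglyMeasurable z μ ∧ V.Mem B x z} => F z.1) (I V)) ∧
    IsAESup μ I (F x)

/-- `F` satisfies the canonical-extension formula
`F(x) = sup_{V ∈ 𝒱(x)} inf { f_s(xt) : xt ∈ V ∩ L⁰ₛ(X) }` for every `x ∈ L⁰(X)`. -/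
def IsCanonicalExt (μ : Measure Ω) (B : X →ₗ[ℝ] Y →ₗ[ℝ] ℝ)
    (f : X → Ω → EReal) (F : (Ω → X) → Ω → EReal) : Prop :=
  ∀ x : Ω → X, AEStronglyMeasurable x μ → ∃ I : NbhdParam μ Y → Ω → EReal,
    (∀ V : NbhdParam μ Y,
      IsAEInf μ (fun p : {p : (Ω → X) × (Ω → EReal) //
        StepPair μ f p.1 p.2 ∧ V.Mem B x p.1} => p.1.2) (I V)) ∧
    IsAESup μ I (F x)

/-- Stability of `F : L⁰(X) → L̄⁰` under countable concatenations:
`F(Σₖ xₖ 1_{Aₖ}) = Σₖ F(xₖ) 1_{Aₖ}` a.e. -/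
def StableFun (μ : Measure Ω) (F : (Ω → X) → Ω → EReal) : Prop :=
  ∀ (xs : ℕ → Ω → X) (A : ℕ → Set Ω) (x : Ω → X),
    (∀ k, AEStronglyMeasurable (xs k) μ) → (∀ k, MeasurableSet (A k)) →
    Pairwise (Disjoint on A) → (⋃ k, A k) = Set.univ →
    (∀ᵐ ω ∂μ, ∀ k, ω ∈ A k → x ω = xs k ω) →
    ∀ᵐ ω ∂μ, ∀ k, ω ∈ A k → F x ω = F (xs k) ω

/-- `f : X → L̄⁰` is proper convex. -/
def ProperConvex (μ : Measure Ω) (f : X → Ω → EReal) : Prop :=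
  (∀ x : X, ∀ᵐ ω ∂μ, f x ω ≠ ⊥) ∧
  (∃ x' : X, ∀ᵐ ω ∂μ, f x' ω ≠ ⊥ ∧ f x' ω ≠ ⊤) ∧
  ∀ (x xt : X) (l : ℝ), 0 ≤ l → l ≤ 1 →
    ∀ᵐ ω ∂μ, f (l • x + (1 - l) • xt) ω ≤
      (l : EReal) * f x ω + ((1 - l : ℝ) : EReal) * f xt ω

/-- `F : L⁰(X) → L̄⁰` is L⁰-proper convex. -/
def L0ProperConvex (μ : Measure Ω) (F : (Ω → X) → Ω → EReal) : Prop :=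
  (∀ x : Ω → X, AEStronglyMeasurable x μ → ∀ᵐ ω ∂μ, F x ω ≠ ⊥) ∧
  (∃ x' : Ω → X, AEStronglyMeasurable x' μ ∧ ∀ᵐ ω ∂μ, F x' ω ≠ ⊥ ∧ F x' ω ≠ ⊤) ∧
  ∀ (x z : Ω → X) (l : Ω → ℝ), AEStronglyMeasurable x μ → AEStronglyMeasurable z μ →
    Measurable l → (∀ ω, 0 ≤ l ω ∧ l ω ≤ 1) →
    ∀ᵐ ω ∂μ, F (fun ω' => l ω' • x ω' + (1 - l ω') • z ω') ω ≤
      (l ω : EReal) * F x ω + ((1 - l ω : ℝ) : EReal) * F z ω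

/-- `U ⊆ L⁰(X)` is open in the stable topology `σ_s(L⁰(X), L⁰(Y))`: for every `x ∈ U`
there is a basic stable neighborhood `V ∈ 𝒱(x)` with `V ⊆ U`. -/
def SigmaSOpen (μ : Measure Ω) (B : X →ₗ[ℝ] Y →ₗ[ℝ] ℝ)
    (U : Set {x : Ω → X // AEStronglyMeasurable x μ}) : Prop :=
  ∀ x ∈ U, ∃ V : NbhdParam μ Y,
    ∀ z : {x : Ω → X // AEStronglyMeasurable x μ}, V.Mem B x.1 z.1 → z ∈ U

end Stable

/-!
(ii) ⇒ (iii). The σ_s-interior of `{z : f_s(z) ≰ a}` traces the complement of the sublevel set.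
If a step function `x = Σ xₖ 1_{Aₖ}` has `f_s(x) ≰ a`, then `a < f(xₖ)` on a non-null part `S` of
some `Aₖ`. The sup-inf formula at `xₖ` gives `V ∈ 𝒱(xₖ)` whose infimum exceeds `a` on a non-null
`C ⊆ S`; cutting `V` down to `C` (`n := n·1_C`) gives a neighbourhood of `x` missing the sublevel
set, since a competitor there, pasted with `xₖ` off `C`, is a competitor in `V`.

(iii) ⇒ (ii). For s-finite `μ` every essential infimum of a family of measurable functions is
attained by a countable subfamily. If `h` dominates the infima over all `V ∈ 𝒱(x)`, then for each
rational `q`, pasting countably many competitors, each where its value is below `q`, yields a point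
of every `V` in the sublevel set of `a := q` on `{h < q}`, `⊤` elsewhere. By closedness `x` lies
in that sublevel set, i.e. `f(x) ≤ q` on `{h < q}`; hence `f(x) ≤ h`.
-/

open scoped ENNReal

section StepFunctions

variable {Ω : Type*} [MeasurableSpace Ω] {μ : Measure Ω} {X : Type*}

theorem exists_measurable_index {S : ℕ → Set Ω} (hS : ∀ n, MeasurableSet (S n)) :
    ∃ idx : Ω → ℕ, Measurable idx ∧ ∀ ω ∈ ⋃ n, S n, ω ∈ S (idx ω) := by
  classical
  have hex : ∀ ω, ∃ n, ω ∈ S n ∨ ω ∉ ⋃ n, S n := fun ω => by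
    by_cases h : ω ∈ ⋃ n, S n
    · obtain ⟨n, hn⟩ := mem_iUnion.1 h
      exact ⟨n, .inl hn⟩
    · exact ⟨0, .inr h⟩
  refine ⟨fun ω => Nat.find (hex ω),
    Measurable.find (f := fun n _ => n) (p := fun n ω => ω ∈ S n ∨ ω ∉ ⋃ n, S n)
      (fun _ => measurable_const)
      (fun n => (hS n).union (MeasurableSet.iUnion hS).compl) hex,
    fun ω hω => ?_⟩
  exact (Nat.find_spec (hex ω)).resolve_right (not_not.2 hω)

theorem Measurable.apply_index {β : Type*} [MeasurableSpace β] {h : ℕ → Ω → β}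
    (hh : ∀ n, Measurable (h n)) {idx : Ω → ℕ} (hidx : Measurable idx) :
    Measurable fun ω => h (idx ω) ω :=
  (measurable_from_prod_countable_left (f := fun p : Ω × ℕ => h p.2 p.1) hh).comp
    (measurable_id.prodMk hidx)

theorem isStep_iff_exists_index {x : Ω → X} :
    IsStep μ x ↔ ∃ (xs : ℕ → X) (idx : Ω → ℕ), Measurable idx ∧ x =ᵐ[μ] fun ω => xs (idx ω) := by
  constructor
  · rintro ⟨xs, A, hA, -, hcover, hx⟩
    obtain ⟨idx, hidx, hmem⟩ := exists_measurable_index hA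
    exact ⟨xs, idx, hidx, hx.mono fun ω h => h _ (hmem ω (hcover ▸ mem_univ ω))⟩
  · rintro ⟨xs, idx, hidx, hx⟩
    refine ⟨xs, fun k => idx ⁻¹' {k}, fun k => hidx (measurableSet_singleton k),
      fun i j hij => disjoint_left.2 fun ω hi hj => hij (hi.symm.trans hj),
      eq_univ_of_forall fun ω => mem_iUnion.2 ⟨idx ω, rfl⟩, ?_⟩
    exact hx.mono fun ω h k hk => h.trans (congrArg xs hk)

theorem isStep_const (c : X) : IsStep μ fun _ => c :=
  isStep_iff_exists_index.2 ⟨fun _ => c, fun _ => 0, measurable_const, .rfl⟩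

theorem IsStep.glue {z : ℕ → Ω → X} (hz : ∀ n, IsStep μ (z n)) {idx : Ω → ℕ}
    (hidx : Measurable idx) : IsStep μ fun ω => z (idx ω) ω := by
  choose xs idxs hidxs hzx using fun n => isStep_iff_exists_index.1 (hz n)
  refine isStep_iff_exists_index.2 ⟨fun m => xs m.unpair.1 m.unpair.2,
    fun ω => Nat.pair (idx ω) (idxs (idx ω) ω),
    Measurable.apply_index (h := fun n ω => Nat.pair n (idxs n ω))
      (fun n => (measurable_from_nat (f := Nat.pair n)).comp (hidxs n)) hidx, ?_⟩
  filter_upwards [ae_all_iff.2 hzx] with ω h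
  simpa only [Nat.unpair_pair] using h (idx ω)

theorem IsStep.piecewise {x y : Ω → X} (hx : IsStep μ x) {C : Set Ω} (hC : MeasurableSet C)
    [DecidablePred (· ∈ C)] (hy : IsStep μ y) : IsStep μ (C.piecewise x y) := by
  convert IsStep.glue (z := fun n => if n = 0 then x else y) (fun n => by split_ifs <;> assumption)
    (Measurable.piecewise hC measurable_const measurable_const : Measurable (C.piecewise 0 1))
    using 1
  ext ω
  by_cases hω : ω ∈ C <;> simp [hω]

theorem IsStep.aestronglyMeasurable [TopologicalSpace X] {x : Ω → X} (hx : IsStep μ x) :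
    AEStronglyMeasurable x μ := by
  obtain ⟨xs, idx, hidx, hx⟩ := isStep_iff_exists_index.1 hx
  exact ⟨_, (StronglyMeasurable.of_discrete (f := xs)).comp_measurable hidx, hx⟩

/-- On step functions this is the extension `f_s` (see `stepPair_iff`). -/
def stepExt {β : Type*} (f : X → Ω → β) (x : Ω → X) : Ω → β := fun ω => f (x ω) ω

variable {f : X → Ω → EReal}

theorem stepPair_iff {x : Ω → X} {g : Ω → EReal} :
    StepPair μ f x g ↔ IsStep μ x ∧ g =ᵐ[μ] stepExt f x := by
  constructor
  · rintro ⟨xs, A, hA, hd, hc, h⟩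
    refine ⟨⟨xs, A, hA, hd, hc, h.mono fun ω h k hk => (h k hk).1⟩, h.mono fun ω h => ?_⟩
    obtain ⟨k, hk⟩ := mem_iUnion.1 (hc ▸ mem_univ ω)
    obtain ⟨hx, hg⟩ := h k hk
    rw [hg, stepExt, hx]
  · rintro ⟨⟨xs, A, hA, hd, hc, hx⟩, hg⟩
    refine ⟨xs, A, hA, hd, hc, ?_⟩
    filter_upwards [hx, hg] with ω hx hg k hk
    exact ⟨hx k hk, by rw [hg, stepExt, hx k hk]⟩

theorem exists_stepPair_le_iff {x : Ω → X} {a : Ω → EReal} :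
    (∃ g, StepPair μ f x g ∧ g ≤ᵐ[μ] a) ↔ IsStep μ x ∧ stepExt f x ≤ᵐ[μ] a := by
  simp only [stepPair_iff]
  constructor
  · rintro ⟨g, ⟨hx, hg⟩, hga⟩
    exact ⟨hx, hg.symm.trans_le hga⟩
  · rintro ⟨hx, hxa⟩
    exact ⟨_, ⟨hx, .rfl⟩, hxa⟩

theorem StepPair.aemeasurable (hf : ∀ c, Measurable (f c)) {x : Ω → X} {g : Ω → EReal}
    (h : StepPair μ f x g) : AEMeasurable g μ := by
  obtain ⟨hx, hg⟩ := stepPair_iff.1 h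
  obtain ⟨xs, idx, hidx, hx⟩ := isStep_iff_exists_index.1 hx
  refine ⟨_, Measurable.apply_index (fun n => hf (xs n)) hidx, ?_⟩
  filter_upwards [hg, hx] with ω hg hx
  rw [hg, stepExt, hx]

end StepFunctions

section EssentialInfimum

variable {Ω : Type*} [MeasurableSpace Ω] {μ : Measure Ω}

/-- A bounded strictly increasing reparametrisation of `EReal`, under which infima can be compared
through finite integrals. -/
def EReal.logistic (t : EReal) : ℝ≥0∞ := (1 + EReal.exp (-t))⁻¹

theorem EReal.strictMono_logistic : StrictMono EReal.logistic := by
  intro s t hst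
  rw [EReal.logistic, EReal.logistic, ENNReal.inv_lt_inv,
    ENNReal.add_lt_add_iff_left ENNReal.one_ne_top, EReal.exp_lt_exp_iff, EReal.neg_lt_neg_iff]
  exact hst

theorem EReal.logistic_le_one (t : EReal) : EReal.logistic t ≤ 1 :=
  ENNReal.inv_le_one.2 le_self_add

theorem exists_seq_ae_iInf_le [SFinite μ] {ι : Type*} [Nonempty ι] {g : ι → Ω → EReal}
    (hg : ∀ i, Measurable (g i)) : ∃ s : ℕ → ι, ∀ i, ∀ᵐ ω ∂μ, ⨅ n, g (s n) ω ≤ g i ω := by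
  obtain ⟨ν, _, hμν, -⟩ := exists_isFiniteMeasure_absolutelyContinuous μ
  set J : (ℕ → ι) → ℝ≥0∞ := fun s => ∫⁻ ω, EReal.logistic (⨅ n, g (s n) ω) ∂ν
  obtain ⟨u, -, hu, hJu⟩ := exists_seq_tendsto_sInf (range_nonempty J) (OrderBot.bddBelow _)
  choose t ht using hJu
  -- `s` enumerates all the sequences `t k` at once, so `J s` is the infimum of `J`.
  set s : ℕ → ι := fun m => t m.unpair.1 m.unpair.2
  have hJs : J s ≤ sInf (range J) := by
    refine ge_of_tendsto' hu fun k => ?_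
    rw [← ht k]
    refine lintegral_mono fun ω => EReal.strictMono_logistic.monotone (le_iInf fun m => ?_)
    simpa [s] using iInf_le (fun n => g (s n) ω) (Nat.pair k m)
  refine ⟨s, fun i => hμν.ae_le ?_⟩
  -- prepending `i` cannot push `J` below its infimum, so it changes `⨅ n, g (s n)` only on a
  -- null set
  set s' : ℕ → ι := fun n => Nat.casesOn n i s
  have hs's : ∀ ω, ⨅ n, g (s' n) ω ≤ ⨅ n, g (s n) ω :=
    fun ω => le_iInf fun n => iInf_le (fun n => g (s' n) ω) (n + 1)
  have hJ_eq : (fun ω => EReal.logistic (⨅ n, g (s' n) ω)) =ᵐ[ν]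
      fun ω => EReal.logistic (⨅ n, g (s n) ω) := by
    refine ae_eq_of_ae_le_of_lintegral_le
      (.of_forall fun ω => EReal.strictMono_logistic.monotone (hs's ω)) ?_ ?_
      (hJs.trans (sInf_le (mem_range_self s')))
    · refine ((lintegral_mono fun ω => EReal.logistic_le_one _).trans_lt ?_).ne
      simp
    · exact (EReal.strictMono_logistic.monotone.measurable.comp
        (Measurable.iInf fun n => hg (s n))).aemeasurable
  filter_upwards [hJ_eq] with ω h
  rw [← EReal.strictMono_logistic.injective h]
  exact iInf_le (fun n => g (s' n) ω) 0

theorem exists_isAEInf_seq [SFinite μ] {ι : Type*} [Nonempty ι] {g : ι → Ω → EReal}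
    (hg : ∀ i, AEMeasurable (g i) μ) :
    ∃ (s : ℕ → ι) (gm : ℕ → Ω → EReal), (∀ n, Measurable (gm n)) ∧
      (∀ n, gm n =ᵐ[μ] g (s n)) ∧ IsAEInf μ g fun ω => ⨅ n, gm n ω := by
  obtain ⟨s, hs⟩ := exists_seq_ae_iInf_le (μ := μ) fun i => (hg i).measurable_mk
  refine ⟨s, fun n => (hg (s n)).mk, fun n => (hg _).measurable_mk,
    fun n => (hg _).ae_eq_mk.symm, .iInf fun n => (hg _).measurable_mk, fun i => ?_,
    fun h _ hh => ?_⟩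
  · filter_upwards [hs i, (hg i).ae_eq_mk] with ω h1 h2
    rw [h2]
    exact h1
  · filter_upwards [ae_all_iff.2 fun n => hh (s n),
      ae_all_iff.2 fun n => (hg (s n)).ae_eq_mk] with ω h1 h2
    exact le_iInf fun n => h2 n ▸ h1 n

theorem EReal.ae_le_of_forall_rat {u v : Ω → EReal}
    (h : ∀ q : ℚ, ∀ᵐ ω ∂μ, u ω < (q : ℝ) → v ω ≤ (q : ℝ)) : v ≤ᵐ[μ] u := by
  filter_upwards [ae_all_iff.2 h] with ω hω
  by_contra! hlt
  obtain ⟨q, huq, hqv⟩ := EReal.exists_rat_btwn_of_lt hlt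
  exact (hω q huq).not_gt hqv

end EssentialInfimum

section StableTopology

variable {Ω : Type*} [MeasurableSpace Ω] {μ : Measure Ω}
  {X Y : Type*} [NormedAddCommGroup X] [NormedSpace ℝ X] [NormedAddCommGroup Y] [NormedSpace ℝ Y]
  {B : X →ₗ[ℝ] Y →ₗ[ℝ] ℝ}

theorem NbhdParam.mem_refl (V : NbhdParam μ Y) (x : Ω → X) : V.Mem B x x :=
  .of_forall fun ω m _ _ => by
    rw [sub_self, map_zero, LinearMap.zero_apply, abs_zero]
    exact (V.r_pos ω).le

def NbhdParam.half (V : NbhdParam μ Y) : NbhdParam μ Y :=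
  { V with
    r := fun ω => V.r ω / 2
    r_meas := V.r_meas.div_const 2
    r_pos := fun ω => half_pos (V.r_pos ω) }

theorem NbhdParam.Mem.trans_half {V : NbhdParam μ Y} {x y z : Ω → X}
    (hxy : V.half.Mem B x y) (hyz : V.half.Mem B y z) : V.Mem B x z := by
  filter_upwards [hxy, hyz] with ω hxy hyz m hm1 hm2
  have hsplit : B (z ω - x ω) (V.ys m ω) = B (y ω - x ω) (V.ys m ω) + B (z ω - y ω) (V.ys m ω) := by
    rw [← LinearMap.add_apply, ← map_add, sub_add_sub_cancel']
  calc |B (z ω - x ω) (V.ys m ω)|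
      ≤ |B (y ω - x ω) (V.ys m ω)| + |B (z ω - y ω) (V.ys m ω)| := hsplit ▸ abs_add_le _ _
    _ ≤ V.r ω / 2 + V.r ω / 2 := add_le_add (hxy m hm1 hm2) (hyz m hm1 hm2)
    _ = V.r ω := add_halves _

theorem sigmaSOpen_setOf_exists_nbhd (P : (Ω → X) → Prop) :
    SigmaSOpen μ B {z | ∃ W : NbhdParam μ Y, ∀ x, W.Mem B z.1 x → P x} := by
  rintro z ⟨W, hW⟩
  exact ⟨W.half, fun w hw => ⟨W.half, fun x hx => hW x (hw.trans_half hx)⟩⟩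

variable {f : X → Ω → EReal} {a : Ω → EReal}

variable (μ B f a) in
def IsClosedStepSublevel : Prop :=
  ∃ U : Set {x : Ω → X // AEStronglyMeasurable x μ}, SigmaSOpen μ B U ∧
    ∀ x : {x : Ω → X // AEStronglyMeasurable x μ}, IsStep μ x.1 →
      (x ∈ U ↔ ¬ ∃ g : Ω → EReal, StepPair μ f x.1 g ∧ g ≤ᵐ[μ] a)

theorem IsClosedStepSublevel.stepExt_le_of_forall_nbhd (hU : IsClosedStepSublevel μ B f a)
    {x : Ω → X} (hx : IsStep μ x)
    (hV : ∀ V : NbhdParam μ Y, ∃ z, IsStep μ z ∧ V.Mem B x z ∧ stepExt f z ≤ᵐ[μ] a) :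
    stepExt f x ≤ᵐ[μ] a := by
  obtain ⟨U, hUopen, hUtrace⟩ := hU
  by_contra hxa
  have hxU : (⟨x, hx.aestronglyMeasurable⟩ : {x : Ω → X // AEStronglyMeasurable x μ}) ∈ U :=
    (hUtrace _ hx).2 fun h => hxa (exists_stepPair_le_iff.1 h).2
  obtain ⟨V, hVU⟩ := hUopen _ hxU
  obtain ⟨z, hz, hzV, hza⟩ := hV V
  exact (hUtrace _ hz).1 (hVU ⟨z, hz.aestronglyMeasurable⟩ hzV) (exists_stepPair_le_iff.2 ⟨hz, hza⟩)

theorem exists_isStep_mem_stepExt_le {V : NbhdParam μ Y} {x : Ω → X} (hx : IsStep μ x)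
    {S : ℕ → Set Ω} (hS : ∀ n, MeasurableSet (S n)) {z : ℕ → Ω → X} (hz : ∀ n, IsStep μ (z n))
    (hzV : ∀ n, V.Mem B x (z n)) (hza : ∀ n, ∀ᵐ ω ∂μ, ω ∈ S n → stepExt f (z n) ω ≤ a ω)
    (hxa : ∀ᵐ ω ∂μ, ω ∉ ⋃ n, S n → stepExt f x ω ≤ a ω) :
    ∃ z', IsStep μ z' ∧ V.Mem B x z' ∧ stepExt f z' ≤ᵐ[μ] a := by
  classical
  obtain ⟨idx, hidx, hmem⟩ := exists_measurable_index hS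
  refine ⟨(⋃ n, S n).piecewise (fun ω => z (idx ω) ω) x,
    (IsStep.glue hz hidx).piecewise (.iUnion hS) hx, ?_, ?_⟩
  · filter_upwards [ae_all_iff.2 hzV, V.mem_refl (B := B) x] with ω hzV hxV
    by_cases hω : ω ∈ ⋃ n, S n
    · simpa only [piecewise_eq_of_mem _ _ _ hω] using hzV (idx ω)
    · simpa only [piecewise_eq_of_notMem _ _ _ hω] using hxV
  · filter_upwards [ae_all_iff.2 hza, hxa] with ω hza hxa
    by_cases hω : ω ∈ ⋃ n, S n
    · simpa only [stepExt, piecewise_eq_of_mem _ _ _ hω] using hza _ (hmem ω hω)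
    · simpa only [stepExt, piecewise_eq_of_notMem _ _ _ hω] using hxa hω

theorem sigmaSLsc_of_isClosedStepSublevel [SFinite μ] (hf : ∀ c, Measurable (f c))
    (hclosed : ∀ a, Measurable a → IsClosedStepSublevel μ B f a) : SigmaSLsc μ B f := by
  intro x
  have hconst (V : NbhdParam μ Y) :
      StepPair μ f (fun _ => x) (f x) ∧ V.Mem B (fun _ => x) (fun _ => x) :=
    ⟨stepPair_iff.2 ⟨isStep_const x, .rfl⟩, V.mem_refl _⟩
  have hinf (V : NbhdParam μ Y) := by
    have : Nonempty {p : (Ω → X) × (Ω → EReal) //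
        StepPair μ f p.1 p.2 ∧ V.Mem B (fun _ => x) p.1} := ⟨⟨(fun _ => x, f x), hconst V⟩⟩
    exact exists_isAEInf_seq (μ := μ) (g := fun p : {p : (Ω → X) × (Ω → EReal) //
      StepPair μ f p.1 p.2 ∧ V.Mem B (fun _ => x) p.1} => p.1.2) fun p => p.2.1.aemeasurable hf
  choose s gm hgm_meas hgm_eq hInf using hinf
  refine ⟨fun V ω => ⨅ n, gm V n ω, hInf, hf x, fun V => (hInf V).2.1 ⟨(fun _ => x, f x), hconst V⟩,
    fun h hh hle => EReal.ae_le_of_forall_rat fun q => ?_⟩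
  classical
  set D := {ω | h ω < (q : ℝ)}
  set a : Ω → EReal := D.piecewise (fun _ => (q : ℝ)) (fun _ => ⊤)
  have hqa (ω : Ω) : ((q : ℝ) : EReal) ≤ a ω := by
    by_cases hω : ω ∈ D <;> simp [a, hω]
  suffices hxa : stepExt f (fun _ => x) ≤ᵐ[μ] a by
    filter_upwards [hxa] with ω hxa hωD
    exact hxa.trans_eq (if_pos hωD)
  refine (hclosed a (Measurable.piecewise (measurableSet_lt hh measurable_const)
    measurable_const measurable_const)).stepExt_le_of_forall_nbhd (isStep_const x) fun V => ?_
  -- competitor `n` is used where its value is below `q`; off these sets `h < q` fails a.e.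
  refine exists_isStep_mem_stepExt_le (isStep_const x) (S := fun n => {ω | gm V n ω < (q : ℝ)})
    (fun n => measurableSet_lt (hgm_meas V n) measurable_const)
    (fun n => (stepPair_iff.1 (s V n).2.1).1) (fun n => (s V n).2.2) (fun n => ?_) ?_
  · filter_upwards [(stepPair_iff.1 (s V n).2.1).2, hgm_eq V n] with ω h1 h2 hω
    rw [← h1, ← h2]
    exact (le_of_lt hω).trans (hqa ω)
  · filter_upwards [hle V] with ω hω hnot
    have hωD : ω ∉ D := fun hωD => hnot (mem_iUnion.2 (iInf_lt_iff.1 (hω.trans_lt hωD)))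
    simp [a, hωD]

theorem SigmaSLsc.exists_nbhd_not_ae_le (hlsc : SigmaSLsc μ B f) (x₀ : X) (ha : Measurable a)
    {S : Set Ω} (hS : MeasurableSet S) (hS0 : μ S ≠ 0) (hlt : ∀ ω ∈ S, a ω < f x₀ ω) :
    ∃ (V : NbhdParam μ Y) (C : Set Ω), MeasurableSet C ∧ C ⊆ S ∧
      ∀ z, IsStep μ z → V.Mem B (fun _ => x₀) z → ¬ ∀ᵐ ω ∂μ, ω ∈ C → stepExt f z ω ≤ a ω := by
  classical
  obtain ⟨I, hinf, hsup⟩ := hlsc x₀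
  set h : Ω → EReal := S.piecewise a fun _ => ⊤
  have hh : Measurable h := ha.piecewise hS measurable_const
  obtain ⟨V, hV⟩ : ∃ V, ¬ ∀ᵐ ω ∂μ, I V ω ≤ h ω := by
    by_contra! hIh
    refine hS0 (measure_mono_null (fun ω hω => ?_) (ae_iff.1 (hsup.2.2 h hh hIh)))
    simpa [h, hω] using hlt ω hω
  set C := {ω | h ω < I V ω}
  have hCS : C ⊆ S := fun ω hω => by
    by_contra hωS
    simp [C, h, hωS] at hω
  have hC0 : μ C ≠ 0 := fun hC0 => hV (ae_iff.2 (by simpa [C] using hC0))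
  refine ⟨V, C, measurableSet_lt hh (hinf V).1, hCS, fun z hz hzV hza => hC0 ?_⟩
  have hIz := (hinf V).2.1 ⟨(z, stepExt f z), stepPair_iff.2 ⟨hz, .rfl⟩, hzV⟩
  refine measure_eq_zero_iff_ae_notMem.2 ?_
  filter_upwards [hIz, hza] with ω hIz hza hωC
  have hha : h ω = a ω := piecewise_eq_of_mem _ _ _ (hCS hωC)
  exact (hωC.trans_le (hIz.trans (hza hωC))).ne hha

theorem SigmaSLsc.exists_nbhd_not_stepExt_le (hlsc : SigmaSLsc μ B f) (hf : ∀ c, Measurable (f c))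
    (ha : Measurable a) {x : Ω → X} (hx : IsStep μ x) (hxa : ¬ stepExt f x ≤ᵐ[μ] a) :
    ∃ W : NbhdParam μ Y, ∀ z, W.Mem B x z → IsStep μ z → ¬ stepExt f z ≤ᵐ[μ] a := by
  classical
  obtain ⟨xs, idx, hidx, hx⟩ := isStep_iff_exists_index.1 hx
  obtain ⟨k, hk⟩ : ∃ k, μ (idx ⁻¹' {k} ∩ {ω | a ω < f (xs k) ω}) ≠ 0 := by
    by_contra! hnull
    refine hxa ?_
    filter_upwards [hx, ae_all_iff.2 fun k => measure_eq_zero_iff_ae_notMem.1 (hnull k)]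
      with ω hxω hω
    show f (x ω) ω ≤ a ω
    rw [hxω]
    exact not_lt.1 fun hlt => hω (idx ω) ⟨rfl, hlt⟩
  obtain ⟨V, C, hC, hCS, hV⟩ := hlsc.exists_nbhd_not_ae_le (xs k) ha
    ((hidx (measurableSet_singleton k)).inter (measurableSet_lt ha (hf (xs k)))) hk
    fun ω hω => hω.2
  -- only the constraints of `V` on `C` are kept: off `C` a competitor is replaced by `xs k`
  let W : NbhdParam μ Y :=
    { V with n := C.piecewise V.n 0, n_meas := V.n_meas.piecewise hC measurable_const }
  refine ⟨W, fun z hzW hz hza => hV (C.piecewise z fun _ => xs k)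
    (hz.piecewise hC (isStep_const _)) ?_ (hza.mono fun ω h hω => ?_)⟩
  · filter_upwards [hzW, hx, V.mem_refl (B := B) fun _ => xs k] with ω hzW hxω hV m hm1 hm2
    by_cases hω : ω ∈ C
    · have hxk : x ω = xs k := hxω.trans (congrArg xs (hCS hω).1)
      have := hzW m hm1 (by simpa [W, hω] using hm2)
      rwa [piecewise_eq_of_mem _ _ _ hω, ← hxk]
    · simpa only [piecewise_eq_of_notMem _ _ _ hω] using hV m hm1 hm2
  · simpa only [stepExt, piecewise_eq_of_mem _ _ _ hω] using h

theorem SigmaSLsc.isClosedStepSublevel (hlsc : SigmaSLsc μ B f) (hf : ∀ c, Measurable (f c))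
    (ha : Measurable a) : IsClosedStepSublevel μ B f a := by
  refine ⟨_, sigmaSOpen_setOf_exists_nbhd fun z => IsStep μ z → ¬ stepExt f z ≤ᵐ[μ] a,
    fun x hx => ?_⟩
  rw [exists_stepPair_le_iff, not_and]
  constructor
  · rintro ⟨W, hW⟩
    exact hW x.1 (W.mem_refl x.1)
  · exact fun hxa => hlsc.exists_nbhd_not_stepExt_le hf ha hx (hxa hx)

end StableTopology

theorem sigmaS_lsc_iff_sublevels_closed_general
    {Ω : Type*} [MeasurableSpace Ω] (μ : Measure Ω) [SigmaFinite μ]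
    {X Y : Type*} [NormedAddCommGroup X] [NormedSpace ℝ X]
    [NormedAddCommGroup Y] [NormedSpace ℝ Y]
    (B : X →ₗ[ℝ] Y →ₗ[ℝ] ℝ)
    (f : X → Ω → EReal) (hf : ∀ x : X, Measurable (f x)) :
    SigmaSLsc μ B f ↔
      ∀ a : Ω → EReal, Measurable a →
        ∃ U : Set {x : Ω → X // AEStronglyMeasurable x μ},
          SigmaSOpen μ B U ∧
          ∀ x : {x : Ω → X // AEStronglyMeasurable x μ}, IsStep μ x.1 →
            (x ∈ U ↔ ¬ ∃ g : Ω → EReal, StepPair μ f x.1 g ∧ g ≤ᵐ[μ] a) :=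
  ⟨fun hlsc _ ha => hlsc.isClosedStepSublevel hf ha, sigmaSLsc_of_isClosedStepSublevel hf⟩

/-- **Proposition 2.4, (ii) ⟺ (iii).** For `f : X → L̄⁰`, the sup-inf formula
`f(x) = sup_{V ∈ 𝒱(x)} inf { f_s(xt) : xt ∈ V ∩ L⁰ₛ(X) }` for every `x ∈ X` holds
if and only if for every measurable `a : Ω → [-∞,∞]` the sublevel set
`{ x ∈ L⁰ₛ(X) : f_s(x) ≤ a a.e. }` is closed in `L⁰ₛ(X)` with the topology induced
from the stable topology σ_s (i.e. its relative complement is the trace of a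
σ_s-open set). -/
theorem sigmaS_lsc_iff_sublevels_closed
    {Ω : Type*} [MeasurableSpace Ω] (μ : Measure Ω) [SigmaFinite μ]
    {X Y : Type*} [NormedAddCommGroup X] [NormedSpace ℝ X] [CompleteSpace X]
    [NormedAddCommGroup Y] [NormedSpace ℝ Y] [CompleteSpace Y]
    (B : X →ₗ[ℝ] Y →ₗ[ℝ] ℝ)
    (hB : ∀ (x : X) (y : Y), |B x y| ≤ ‖x‖ * ‖y‖)
    (hsepX : ∀ x : X, x ≠ 0 → ∃ y : Y, B x y ≠ 0)
    (hsepY : ∀ y : Y, y ≠ 0 → ∃ x : X, B x y ≠ 0)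
    (hballX : @IsClosed X (weakTopol B) {x : X | ‖x‖ ≤ 1})
    (hballY : @IsClosed Y (weakTopol B.flip) {y : Y | ‖y‖ ≤ 1})
    (f : X → Ω → EReal) (hf : ∀ x : X, Measurable (f x)) :
    SigmaSLsc μ B f ↔
      ∀ a : Ω → EReal, Measurable a →
        ∃ U : Set {x : Ω → X // AEStronglyMeasurable x μ},
          SigmaSOpen μ B U ∧
          ∀ x : {x : Ω → X // AEStronglyMeasurable x μ}, IsStep μ x.1 →
            (x ∈ U ↔ ¬ ∃ g : Ω → EReal, StepPair μ f x.1 g ∧ g ≤ᵐ[μ] a) :=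
  sigmaS_lsc_iff_sublevels_closed_general μ B f hf
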